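/- arXiv:2206.10833 — 3 statements merged into one kernel-verified Lean document; each statement's English description precedes it below -/
import Mathlib

section
/- Let x, x̂ ∈ ℝ^p, σ > 0, ε₀ ≥ 0. The minimum over μ ∈ ℝ^p and d ∈ ℝ^p with d_j ≥ σ for all j, ‖μ - x̂‖₂² + ∑_j (d_j - σ)² ≤ ε₀², and d_p = max_j d_j, of the quantity ∑_{j=1}^p log d_j + ‖x - μ‖₂²/(2 d_p²) equals the minimum over (a, d_p) ∈ ℝ² with a ≥ 0, d_p ≥ σ, a² + (d_p - σ)² ≤ ε₀², of log d_p + (‖x - x̂‖₂ - a)²/(2 d_p²) + (p-1) log σ. -/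
theorem dimension_reduction_max (p : ℕ) (hp : 0 < p)
    (x xhat : EuclideanSpace ℝ (Fin p)) (σ ε₀ : ℝ) (hσ : 0 < σ) (hε : 0 ≤ ε₀) :
    sInf {t : ℝ | ∃ (μ : EuclideanSpace ℝ (Fin p)) (d : Fin p → ℝ),
        (∀ j, σ ≤ d j) ∧
        ‖μ - xhat‖ ^ 2 + (∑ j, (d j - σ) ^ 2) ≤ ε₀ ^ 2 ∧
        (∀ j, d j ≤ d ⟨p - 1, by omega⟩) ∧
        t = (∑ j, Real.log (d j)) + ‖x - μ‖ ^ 2 / (2 * (d ⟨p - 1, by omega⟩) ^ 2)} =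
    sInf {t : ℝ | ∃ a dp : ℝ, 0 ≤ a ∧ σ ≤ dp ∧ a ^ 2 + (dp - σ) ^ 2 ≤ ε₀ ^ 2 ∧
        t = Real.log dp + (‖x - xhat‖ - a) ^ 2 / (2 * dp ^ 2) +
          ((p : ℝ) - 1) * Real.log σ} := by
  have hL : (⟨p - 1, by omega⟩ : Fin p) = ⟨p - 1, by omega⟩ := rfl
  set L : Fin p := ⟨p - 1, by omega⟩ with hLdef
  set r := ‖x - xhat‖ with hrdef
  have hr0 : 0 ≤ r := norm_nonneg _
  have hp1 : (1:ℝ) ≤ (p:ℝ) := by exact_mod_cast hp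
  -- Bounded below facts
  have bddS : BddBelow {t : ℝ | ∃ (μ : EuclideanSpace ℝ (Fin p)) (d : Fin p → ℝ),
        (∀ j, σ ≤ d j) ∧
        ‖μ - xhat‖ ^ 2 + (∑ j, (d j - σ) ^ 2) ≤ ε₀ ^ 2 ∧
        (∀ j, d j ≤ d L) ∧
        t = (∑ j, Real.log (d j)) + ‖x - μ‖ ^ 2 / (2 * (d L) ^ 2)} := by
    refine ⟨(p:ℝ) * Real.log σ, ?_⟩
    rintro t ⟨μ', d', hd', -, -, rfl⟩
    have h1 : (p:ℝ) * Real.log σ ≤ ∑ j, Real.log (d' j) := by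
      have : ∑ _j : Fin p, Real.log σ = (p:ℝ) * Real.log σ := by
        simp [Finset.sum_const, Finset.card_univ, nsmul_eq_mul]
      rw [← this]
      exact Finset.sum_le_sum fun j _ => Real.log_le_log hσ (hd' j)
    have h2 : 0 ≤ ‖x - μ'‖ ^ 2 / (2 * (d' L) ^ 2) := by positivity
    linarith
  have bddT : BddBelow {t : ℝ | ∃ a dp : ℝ, 0 ≤ a ∧ σ ≤ dp ∧ a ^ 2 + (dp - σ) ^ 2 ≤ ε₀ ^ 2 ∧
        t = Real.log dp + (r - a) ^ 2 / (2 * dp ^ 2) + ((p : ℝ) - 1) * Real.log σ} := by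
    refine ⟨(p:ℝ) * Real.log σ, ?_⟩
    rintro t ⟨a, dp, ha, hdp, -, rfl⟩
    have hdp0 : 0 < dp := lt_of_lt_of_le hσ hdp
    have h1 : Real.log σ ≤ Real.log dp := Real.log_le_log hσ hdp
    have h2 : 0 ≤ (r - a) ^ 2 / (2 * dp ^ 2) := by positivity
    nlinarith
  apply le_antisymm
  · -- sInf S ≤ sInf T
    apply le_csInf
    · exact ⟨_, 0, σ, le_rfl, le_rfl, by norm_num; positivity, rfl⟩
    rintro t ⟨a, dp, ha, hdp, hcon, rfl⟩
    have hdp0 : 0 < dp := lt_of_lt_of_le hσ hdp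
    set a' := min a r with ha'def
    have ha'0 : 0 ≤ a' := le_min ha hr0
    have ha'r : a' ≤ r := min_le_right _ _
    have ha'a : a' ≤ a := min_le_left _ _
    set μ : EuclideanSpace ℝ (Fin p) := xhat + (a' / r) • (x - xhat) with hμdef
    have hμx : ‖μ - xhat‖ = a' := by
      have h1 : μ - xhat = (a' / r) • (x - xhat) := by
        rw [hμdef]; abel
      by_cases h : r = 0
      · have hx0 : x - xhat = 0 := by rwa [hrdef, norm_eq_zero] at h
        have ha0 : a' = 0 := le_antisymm (h ▸ ha'r) ha'0
        simp [h1, hx0, ha0]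
      · rw [h1, norm_smul, Real.norm_eq_abs, abs_of_nonneg (div_nonneg ha'0 hr0), ← hrdef]
        field_simp
    have hxμ : ‖x - μ‖ = r - a' := by
      have h1 : x - μ = (1 - a' / r) • (x - xhat) := by
        rw [hμdef, sub_smul, one_smul]; abel
      by_cases h : r = 0
      · have hx0 : x - xhat = 0 := by rwa [hrdef, norm_eq_zero] at h
        have ha0 : a' = 0 := le_antisymm (h ▸ ha'r) ha'0
        simp [h1, hx0, ha0, h]
      · have hrpos : 0 < r := lt_of_le_of_ne hr0 (Ne.symm h)
        have h2 : 0 ≤ 1 - a' / r := by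
          rw [sub_nonneg, div_le_one hrpos]; exact ha'r
        rw [h1, norm_smul, Real.norm_eq_abs, abs_of_nonneg h2, ← hrdef]
        field_simp
    set d : Fin p → ℝ := fun j => if j = L then dp else σ with hddef
    have hdL : d L = dp := if_pos rfl
    have hdj : ∀ j, σ ≤ d j := by
      intro j; by_cases h : j = L <;> simp [hddef, h, hdp]
    have hmax : ∀ j, d j ≤ d L := by
      intro j; rw [hdL]; by_cases h : j = L <;> simp [hddef, h, hdp]
    have hsum1 : ∑ j, (d j - σ) ^ 2 = (dp - σ) ^ 2 := by
      have h1 : ∀ j : Fin p, (d j - σ) ^ 2 = if j = L then (dp - σ) ^ 2 else 0 := by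
        intro j; by_cases h : j = L <;> simp [hddef, h]
      rw [Finset.sum_congr rfl fun j _ => h1 j]
      simp
    have hsum2 : ∑ j, Real.log (d j) = Real.log dp + ((p:ℝ) - 1) * Real.log σ := by
      have h1 : ∀ j : Fin p, Real.log (d j)
          = (if j = L then Real.log dp - Real.log σ else 0) + Real.log σ := by
        intro j; by_cases h : j = L <;> simp [hddef, h]
      rw [Finset.sum_congr rfl fun j _ => h1 j, Finset.sum_add_distrib]
      simp [Finset.sum_const, Finset.card_univ, nsmul_eq_mul]
      ring
    refine le_trans (csInf_le bddS ⟨μ, d, hdj, ?_, hmax, rfl⟩) ?_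
    · rw [hμx, hsum1]
      have := pow_le_pow_left₀ ha'0 ha'a 2
      linarith
    · rw [hsum2, hdL, hxμ]
      have hsq : (r - a') ^ 2 ≤ (r - a) ^ 2 := by
        rcases le_total a r with h | h
        · have he : a' = a := min_eq_left h
          rw [he]
        · have he : a' = r := min_eq_right h
          rw [he]; simpa using sq_nonneg (r - a)
      have h3 : (r - a') ^ 2 / (2 * dp ^ 2) ≤ (r - a) ^ 2 / (2 * dp ^ 2) := by
        gcongr
      linarith
  · -- sInf T ≤ sInf S
    apply le_csInf
    · refine ⟨_, xhat, fun _ => σ, fun _ => le_rfl, ?_, fun _ => le_rfl, rfl⟩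
      simp; positivity
    rintro t ⟨μ, d, hd, hcon, hmax, rfl⟩
    have hdpσ : σ ≤ d L := hd L
    have hdp0 : 0 < d L := lt_of_lt_of_le hσ hdpσ
    refine le_trans (csInf_le bddT ⟨‖μ - xhat‖, d L, norm_nonneg _, hdpσ, ?_, rfl⟩) ?_
    · have h1 : (d L - σ) ^ 2 ≤ ∑ j, (d j - σ) ^ 2 :=
        Finset.single_le_sum (f := fun j => (d j - σ) ^ 2)
          (fun j _ => sq_nonneg _) (Finset.mem_univ L)
      linarith
    · have h1 : (r - ‖μ - xhat‖) ^ 2 ≤ ‖x - μ‖ ^ 2 := by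
        have habs : |r - ‖μ - xhat‖| ≤ ‖x - μ‖ := by
          have h := abs_norm_sub_norm_le (x - xhat) (μ - xhat)
          rwa [sub_sub_sub_cancel_right] at h
        calc (r - ‖μ - xhat‖) ^ 2 = |r - ‖μ - xhat‖| ^ 2 := (sq_abs _).symm
          _ ≤ ‖x - μ‖ ^ 2 := pow_le_pow_left₀ (abs_nonneg _) habs 2
      have h2 : Real.log (d L) + ((p:ℝ) - 1) * Real.log σ ≤ ∑ j, Real.log (d j) := by
        have hce : (Finset.univ.erase L).card = p - 1 := by
          rw [Finset.card_erase_of_mem (Finset.mem_univ L), Finset.card_univ, Fintype.card_fin]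
        have hsplit := Finset.add_sum_erase Finset.univ (fun j => Real.log (d j))
          (Finset.mem_univ L)
        have hrest : ((p:ℝ) - 1) * Real.log σ ≤ ∑ j ∈ Finset.univ.erase L, Real.log (d j) := by
          have hconst : ∑ _j ∈ Finset.univ.erase L, Real.log σ = ((p:ℝ) - 1) * Real.log σ := by
            rw [Finset.sum_const, hce, nsmul_eq_mul, Nat.cast_sub hp, Nat.cast_one]
          rw [← hconst]
          exact Finset.sum_le_sum fun j _ => Real.log_le_log hσ (hd j)
        linarith
      have h3 : (r - ‖μ - xhat‖) ^ 2 / (2 * (d L) ^ 2) ≤ ‖x - μ‖ ^ 2 / (2 * (d L) ^ 2) := by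
        gcongr
      linarith
end

section
/- For p ≥ 2, σ > 0, ε₁ ≥ 0, and any fixed a ≥ 0, d₁ ∈ [σ, ∞) with a² + p(d₁ - σ)² ≤ ε₁², the minimum of -∑_{j=2}^p log d_j over d₂,…,d_p with d_j ≥ d₁ for all j and ∑_{j=2}^p (d_j - σ)² ≤ ε₁² - a² - (d₁ - σ)² equals -(p-1) log(σ + √((ε₁² - a² - (d₁-σ)²)/(p-1))), attained at d_j = σ + √((ε₁² - a² - (d₁-σ)²)/(p-1)) for all j. -/
set_option maxHeartbeats 1000000


theorem inner_log_max_pessimistic (p : ℕ) (hp : 2 ≤ p) (σ ε₁ : ℝ)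
    (hσ : 0 < σ) (hε : 0 ≤ ε₁)
    (a d₁ : ℝ) (ha : 0 ≤ a) (hd₁ : σ ≤ d₁)
    (hfeas : a ^ 2 + (p : ℝ) * (d₁ - σ) ^ 2 ≤ ε₁ ^ 2) :
    IsLeast {t : ℝ | ∃ d : Fin (p - 1) → ℝ, (∀ j, d₁ ≤ d j) ∧
        (∑ j, (d j - σ) ^ 2) ≤ ε₁ ^ 2 - a ^ 2 - (d₁ - σ) ^ 2 ∧
        t = -∑ j, Real.log (d j)}
      (-(((p : ℝ) - 1) * Real.log (σ +
          Real.sqrt ((ε₁ ^ 2 - a ^ 2 - (d₁ - σ) ^ 2) / ((p : ℝ) - 1))))) ∧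
    ((∀ _j : Fin (p - 1), d₁ ≤ σ +
          Real.sqrt ((ε₁ ^ 2 - a ^ 2 - (d₁ - σ) ^ 2) / ((p : ℝ) - 1))) ∧
      (∑ _j : Fin (p - 1), (σ +
          Real.sqrt ((ε₁ ^ 2 - a ^ 2 - (d₁ - σ) ^ 2) / ((p : ℝ) - 1)) - σ) ^ 2)
        ≤ ε₁ ^ 2 - a ^ 2 - (d₁ - σ) ^ 2 ∧
      (-(∑ _j : Fin (p - 1), Real.log (σ +
          Real.sqrt ((ε₁ ^ 2 - a ^ 2 - (d₁ - σ) ^ 2) / ((p : ℝ) - 1)))))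
        = -(((p : ℝ) - 1) * Real.log (σ +
          Real.sqrt ((ε₁ ^ 2 - a ^ 2 - (d₁ - σ) ^ 2) / ((p : ℝ) - 1))))) := by
  have hp1 : (1:ℝ) ≤ (p:ℝ) - 1 := by
    have : (2:ℝ) ≤ (p:ℝ) := by exact_mod_cast hp
    linarith
  have hn : ((p - 1 : ℕ) : ℝ) = (p:ℝ) - 1 := by
    have h1 : 1 ≤ p := by omega
    push_cast [Nat.cast_sub h1]
    ring
  set R : ℝ := ε₁ ^ 2 - a ^ 2 - (d₁ - σ) ^ 2 with hRdef
  have hdσ : 0 ≤ d₁ - σ := by linarith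
  have hR : ((p:ℝ) - 1) * (d₁ - σ) ^ 2 ≤ R := by
    have : (p:ℝ) * (d₁ - σ) ^ 2 ≤ ε₁ ^ 2 - a ^ 2 := by linarith
    nlinarith [sq_nonneg (d₁ - σ)]
  have hR0 : 0 ≤ R :=
    le_trans (mul_nonneg (by linarith) (sq_nonneg _)) hR
  set s : ℝ := Real.sqrt (R / ((p:ℝ) - 1)) with hsdef
  have hs0 : 0 ≤ s := Real.sqrt_nonneg _
  have hssq : s ^ 2 = R / ((p:ℝ) - 1) :=
    Real.sq_sqrt (div_nonneg hR0 (by linarith))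
  have hRs : R = ((p:ℝ) - 1) * s ^ 2 := by
    rw [hssq]; field_simp
  have hc : 0 < σ + s := by linarith
  have hd₁c : d₁ ≤ σ + s := by
    have h1 : (d₁ - σ) ^ 2 ≤ R / ((p:ℝ) - 1) := by
      rw [le_div_iff₀ (by linarith : (0:ℝ) < (p:ℝ) - 1)]
      nlinarith
    have h2 := Real.sqrt_le_sqrt h1
    rw [Real.sqrt_sq hdσ] at h2
    linarith [h2]
  have hcard : (Finset.univ : Finset (Fin (p-1))).card = p - 1 := by simp
  have hsum_opt : (∑ _j : Fin (p-1), (σ + s - σ) ^ 2) = R := by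
    rw [Finset.sum_const, hcard, nsmul_eq_mul, hn]
    have h : σ + s - σ = s := by ring
    rw [h, hssq]
    field_simp
  have hlogsum : (∑ _j : Fin (p-1), Real.log (σ + s)) = ((p:ℝ) - 1) * Real.log (σ + s) := by
    rw [Finset.sum_const, hcard, nsmul_eq_mul, hn]
  have key : ∀ d : Fin (p-1) → ℝ, (∀ j, d₁ ≤ d j) →
      (∑ j, (d j - σ) ^ 2) ≤ R →
      (∑ j, Real.log (d j)) ≤ ((p:ℝ) - 1) * Real.log (σ + s) := by
    intro d hge hsum
    have hdpos : ∀ j, 0 < d j := fun j => lt_of_lt_of_le hσ (le_trans hd₁ (hge j))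
    have hS0 : 0 ≤ ∑ j, (d j - σ) :=
      Finset.sum_nonneg fun j _ => by linarith [hge j]
    have hCS : (∑ j, (d j - σ)) ^ 2 ≤ ((p:ℝ) - 1) * ∑ j, (d j - σ) ^ 2 := by
      have h := sq_sum_le_card_mul_sum_sq (s := (Finset.univ : Finset (Fin (p-1))))
        (f := fun j => d j - σ)
      rw [hcard, hn] at h
      exact h
    have hns0 : 0 ≤ ((p:ℝ) - 1) * s := mul_nonneg (by linarith) hs0
    have hSle : (∑ j, (d j - σ)) ≤ ((p:ℝ) - 1) * s := by
      nlinarith [hCS, hsum, hRs, hS0, hns0, mul_nonneg hS0 hns0]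
    have hlog : ∀ j, Real.log (d j) ≤ Real.log (σ + s) + (d j - (σ + s)) / (σ + s) := by
      intro j
      have h := Real.log_le_sub_one_of_pos (div_pos (hdpos j) hc)
      rw [Real.log_div (ne_of_gt (hdpos j)) (ne_of_gt hc)] at h
      have h2 : d j / (σ + s) - 1 = (d j - (σ + s)) / (σ + s) := by
        field_simp
      linarith [h, h2.ge, h2.le]
    calc (∑ j, Real.log (d j))
        ≤ ∑ j, (Real.log (σ + s) + (d j - (σ + s)) / (σ + s)) :=
          Finset.sum_le_sum fun j _ => hlog j
      _ = ((p:ℝ) - 1) * Real.log (σ + s)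
            + ((∑ j, d j) - ((p:ℝ) - 1) * (σ + s)) / (σ + s) := by
          rw [Finset.sum_add_distrib, Finset.sum_const, hcard, nsmul_eq_mul, hn,
            ← Finset.sum_div, Finset.sum_sub_distrib, Finset.sum_const, hcard,
            nsmul_eq_mul, hn]
      _ ≤ ((p:ℝ) - 1) * Real.log (σ + s) := by
          have hd_sum : (∑ j, d j) = (∑ j, (d j - σ)) + ((p:ℝ) - 1) * σ := by
            rw [Finset.sum_sub_distrib, Finset.sum_const, hcard, nsmul_eq_mul, hn]
            ring
          have hnum : (∑ j, d j) - ((p:ℝ) - 1) * (σ + s) ≤ 0 := by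
            rw [hd_sum]
            have hexp : ((p:ℝ) - 1) * (σ + s) = ((p:ℝ)-1) * σ + ((p:ℝ)-1) * s := by ring
            linarith [hSle]
          have := div_nonpos_of_nonpos_of_nonneg hnum (le_of_lt hc)
          linarith
  refine ⟨⟨⟨fun _ => σ + s, fun _ => hd₁c, le_of_eq hsum_opt, by rw [hlogsum]⟩, ?_⟩,
    fun _ => hd₁c, le_of_eq hsum_opt, by rw [hlogsum]⟩
  rintro t ⟨d, hge, hsum, rfl⟩
  have := key d hge hsum
  linarith
end

section
/- Let μ*, Σ* solve the maximization of the Gaussian density f(x | μ, Σ) over μ ∈ ℝ^p and Σ ⪰ σ²I subject to ‖μ - x̂‖₂² + Tr(Σ + σ²I - 2(σ² Σ)^{1/2}) ≤ ε₀², where x ≠ x̂ and 0 < ε₀ < ‖x - x̂‖₂. Then the constraint is active at the optimum: ‖μ* - x̂‖₂² + Tr(Σ* + σ²I - 2(σ²Σ*)^{1/2}) = ε₀². -/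
/-!
If the constraint were slack at `(μ*, Σ*)`, the mean could be moved a little towards `x`
without leaving the feasible set, the cost being continuous in `μ`. Moving towards `x`
strictly shrinks the Mahalanobis distance `(x - μ)ᵀ Σ*⁻¹ (x - μ)` and hence strictly increases
the density, unless already `μ* = x`. That case is infeasible: with `c = σ²` and
`R = (c Σ)^{1/2}` one has `c (Σ + c I - 2 R) = (R - c I)²`, so the trace term of the cost is
nonnegative and the cost is at least `‖x - x̂‖² > ε₀²`.
-/

open Matrix Real

open Classical in
/-- Positive-semidefinite square root of a matrix, extended by `0` on
non-PSD matrices. -/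
noncomputable def msqrt {p : ℕ} (M : Matrix (Fin p) (Fin p) ℝ) :
    Matrix (Fin p) (Fin p) ℝ :=
  if h : M.PosSemidef then
    (h.1.eigenvectorUnitary : Matrix (Fin p) (Fin p) ℝ) *
      diagonal ((↑) ∘ (√·) ∘ h.1.eigenvalues) *
      (star h.1.eigenvectorUnitary : Matrix (Fin p) (Fin p) ℝ)
  else 0

/-- The Gaussian density `f(x | μ, Σ)`. -/
noncomputable def gaussDensity {p : ℕ} (x μ : Fin p → ℝ)
    (S : Matrix (Fin p) (Fin p) ℝ) : ℝ :=
  Real.exp (-(1 / 2) * ((x - μ) ⬝ᵥ S⁻¹.mulVec (x - μ))) /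
    ((2 * π) ^ ((p : ℝ) / 2) * Real.sqrt S.det)

/-- The squared Gaussian-Wasserstein transport cost from `N(μ, S)` to
`N(x̂, σ²I)`. -/
noncomputable def wcost {p : ℕ} (σ : ℝ) (xhat μ : Fin p → ℝ)
    (S : Matrix (Fin p) (Fin p) ℝ) : ℝ :=
  (μ - xhat) ⬝ᵥ (μ - xhat) +
    (S + σ ^ 2 • (1 : Matrix (Fin p) (Fin p) ℝ) -
      2 • msqrt (σ ^ 2 • S)).trace

open Unitary in
lemma msqrt_eq_conjStarAlgAut {p : ℕ} {M : Matrix (Fin p) (Fin p) ℝ} (h : M.PosSemidef) :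
    msqrt M = conjStarAlgAut ℝ _ h.1.eigenvectorUnitary
      (diagonal ((↑) ∘ (√·) ∘ h.1.eigenvalues)) := by
  rw [msqrt, dif_pos h, conjStarAlgAut_apply]

lemma Matrix.PosSemidef.msqrt_mul_self {p : ℕ} {M : Matrix (Fin p) (Fin p) ℝ}
    (h : M.PosSemidef) : msqrt M * msqrt M = M := by
  rw [msqrt_eq_conjStarAlgAut h, ← map_mul, diagonal_mul_diagonal]
  conv_rhs => rw [h.1.spectral_theorem]
  congr 2
  funext i
  simp [Real.mul_self_sqrt (h.eigenvalues_nonneg i)]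

lemma Matrix.PosSemidef.isHermitian_msqrt {p : ℕ} {M : Matrix (Fin p) (Fin p) ℝ}
    (h : M.PosSemidef) : (msqrt M).IsHermitian := by
  rw [msqrt_eq_conjStarAlgAut h]
  exact ((isHermitian_diagonal _).isSelfAdjoint.map _).isHermitian

lemma Matrix.PosSemidef.trace_add_smul_one_sub_two_msqrt_nonneg {p : ℕ}
    {S : Matrix (Fin p) (Fin p) ℝ} (hS : S.PosSemidef) {c : ℝ} (hc : 0 < c) :
    0 ≤ (S + c • (1 : Matrix (Fin p) (Fin p) ℝ) - 2 • msqrt (c • S)).trace := by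
  have hcS := hS.smul hc.le
  set R := msqrt (c • S)
  have hsq : c • (S + c • 1 - 2 • R) = (R - c • 1)ᴴ * (R - c • 1) := by
    rw [conjTranspose_sub, hcS.isHermitian_msqrt.eq, conjTranspose_smul, conjTranspose_one,
      star_trivial, sub_mul, mul_sub, mul_sub, hcS.msqrt_mul_self]
    simp only [smul_add, smul_sub, mul_smul_comm, smul_mul_assoc, mul_one, one_mul, two_smul]
    abel
  have := (posSemidef_conjTranspose_mul_self (R - c • 1)).trace_nonneg
  rw [← hsq, trace_smul, smul_eq_mul] at this
  exact nonneg_of_mul_nonneg_right this hc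

lemma dotProduct_sub_self_le_wcost {p : ℕ} {σ : ℝ} (hσ : σ ≠ 0) (xhat μ : Fin p → ℝ)
    {S : Matrix (Fin p) (Fin p) ℝ} (hS : S.PosSemidef) :
    (μ - xhat) ⬝ᵥ (μ - xhat) ≤ wcost σ xhat μ S :=
  le_add_of_nonneg_right (hS.trace_add_smul_one_sub_two_msqrt_nonneg (by positivity))

lemma continuous_wcost {p : ℕ} (σ : ℝ) (xhat : Fin p → ℝ) (S : Matrix (Fin p) (Fin p) ℝ) :
    Continuous fun μ => wcost σ xhat μ S := by
  unfold wcost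
  fun_prop

lemma gaussDensity_lt_gaussDensity {p : ℕ} {x μ ν : Fin p → ℝ} {S : Matrix (Fin p) (Fin p) ℝ}
    (hS : 0 < S.det)
    (h : (x - ν) ⬝ᵥ S⁻¹ *ᵥ (x - ν) < (x - μ) ⬝ᵥ S⁻¹ *ᵥ (x - μ)) :
    gaussDensity x μ S < gaussDensity x ν S := by
  unfold gaussDensity
  have hZ : 0 < (2 * π) ^ ((p : ℝ) / 2) * √S.det := by positivity
  rw [div_lt_div_iff_of_pos_right hZ, exp_lt_exp]
  linarith

lemma Matrix.PosDef.gaussDensity_lt_gaussDensity_add_smul_sub {p : ℕ} {x μ : Fin p → ℝ}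
    {S : Matrix (Fin p) (Fin p) ℝ} (hS : S.PosDef) (hμ : μ ≠ x) {t : ℝ} (ht₀ : 0 < t)
    (ht₁ : t < 1) : gaussDensity x μ S < gaussDensity x (μ + t • (x - μ)) S := by
  have hQ : 0 < (x - μ) ⬝ᵥ S⁻¹ *ᵥ (x - μ) := by
    simpa using hS.inv.dotProduct_mulVec_pos (sub_ne_zero.2 hμ.symm)
  have hsub : x - (μ + t • (x - μ)) = (1 - t) • (x - μ) := by
    rw [sub_smul, one_smul]; abel
  refine gaussDensity_lt_gaussDensity hS.det_pos ?_
  rw [hsub, mulVec_smul, smul_dotProduct, dotProduct_smul, smul_eq_mul, smul_eq_mul]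
  nlinarith [mul_pos ht₀ hQ]

theorem constraint_active_at_optimum_general (p : ℕ) (σ ε₀ : ℝ) (hσ : 0 < σ)
    (x xhat : Fin p → ℝ)
    (hfar : ε₀ ^ 2 < (x - xhat) ⬝ᵥ (x - xhat))
    (μstar : Fin p → ℝ) (Sstar : Matrix (Fin p) (Fin p) ℝ)
    (hpsd : (Sstar - σ ^ 2 • (1 : Matrix (Fin p) (Fin p) ℝ)).PosSemidef)
    (hfeas : wcost σ xhat μstar Sstar ≤ ε₀ ^ 2)
    (hopt : ∀ (μ : Fin p → ℝ) (S : Matrix (Fin p) (Fin p) ℝ),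
      (S - σ ^ 2 • (1 : Matrix (Fin p) (Fin p) ℝ)).PosSemidef →
      wcost σ xhat μ S ≤ ε₀ ^ 2 →
      gaussDensity x μ S ≤ gaussDensity x μstar Sstar) :
    wcost σ xhat μstar Sstar = ε₀ ^ 2 := by
  have hS : Sstar.PosDef := by
    simpa using PosDef.posSemidef_add hpsd (PosDef.one.smul (pow_pos hσ 2))
  refine hfeas.antisymm (not_lt.1 fun hlt => ?_)
  have hμ : μstar ≠ x := by
    rintro rfl
    exact hlt.not_gt (hfar.trans_le (dotProduct_sub_self_le_wcost hσ.ne' _ _ hS.posSemidef))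
  have hcont : ContinuousAt (fun t : ℝ => wcost σ xhat (μstar + t • (x - μstar)) Sstar) 0 :=
    ((continuous_wcost σ xhat Sstar).comp (by fun_prop)).continuousAt
  have hslack : ∀ᶠ t in nhdsWithin (0 : ℝ) (Set.Ioi 0),
      wcost σ xhat (μstar + t • (x - μstar)) Sstar < ε₀ ^ 2 ∧ t < 1 :=
    nhdsWithin_le_nhds <|
      (hcont.eventually (gt_mem_nhds (by simpa using hlt))).and (gt_mem_nhds one_pos)
  obtain ⟨t, ⟨ht_feas, ht₁⟩, ht₀⟩ := (hslack.and self_mem_nhdsWithin).exists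
  exact (hopt _ _ hpsd ht_feas.le).not_gt
    (hS.gaussDensity_lt_gaussDensity_add_smul_sub hμ ht₀ ht₁)

theorem constraint_active_at_optimum (p : ℕ) (σ ε₀ : ℝ) (hσ : 0 < σ)
    (hε : 0 < ε₀) (x xhat : Fin p → ℝ) (hxx : x ≠ xhat)
    (hfar : ε₀ ^ 2 < (x - xhat) ⬝ᵥ (x - xhat))
    (μstar : Fin p → ℝ) (Sstar : Matrix (Fin p) (Fin p) ℝ)
    (hpsd : (Sstar - σ ^ 2 • (1 : Matrix (Fin p) (Fin p) ℝ)).PosSemidef)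
    (hfeas : wcost σ xhat μstar Sstar ≤ ε₀ ^ 2)
    (hopt : ∀ (μ : Fin p → ℝ) (S : Matrix (Fin p) (Fin p) ℝ),
      (S - σ ^ 2 • (1 : Matrix (Fin p) (Fin p) ℝ)).PosSemidef →
      wcost σ xhat μ S ≤ ε₀ ^ 2 →
      gaussDensity x μ S ≤ gaussDensity x μstar Sstar) :
    wcost σ xhat μstar Sstar = ε₀ ^ 2 :=
  constraint_active_at_optimum_general p σ ε₀ hσ x xhat hfar μstar Sstar hpsd hfeas hopt
end
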